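/- (Ordering lemma, general dimension.) For every fixed integer d ≥ 1 there is a constant C_d > 0 with the following property. Let V be a finite set with |V| = n ≥ 2, let w : V × V → ℝ≥0 be symmetric with w(v,v) = 0, let dist be a metric on V satisfying the d-dimensional spreading constraints, and let v₀ ∈ V. Then there exists a bijection q : V → {0, 1, …, n−1} with q(v₀) = 0 such that ∑_{{u,v}} w(u,v) · |q(u) − q(v)|^{1/d} ≤ C_d · log n · ∑_{{u,v}} w(u,v) · dist(u,v). -/

import Mathlib

open scoped BigOperators

/-- `dist` is a metric on `V`. -/
def IsMetric {V : Type*} (dist : V → V → ℝ) : Prop :=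
  (∀ x, dist x x = 0) ∧ (∀ x y, 0 ≤ dist x y) ∧ (∀ x y, dist x y = dist y x) ∧
  (∀ x y z, dist x z ≤ dist x y + dist y z) ∧ (∀ x y, dist x y = 0 → x = y)

/-- `dist` satisfies the `d`-dimensional spreading constraints. -/
def Spreading {V : Type*} (d : ℕ) (dist : V → V → ℝ) : Prop :=
  ∀ S : Finset V, ∀ u ∈ S,
    ((S.card : ℝ) - 1) ^ ((1 : ℝ) + 1 / (d : ℝ)) / 4 ≤ ∑ v ∈ S, dist u v

/-!
Draw a priority order `π` of `V` and a shift `m`, and at every scale `j ≤ L` cluster `V` by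
the rule of Calinescu, Karloff and Rabani: `v` joins the `π`-first point within a radius
`ρ_j ∈ [2 ^ j / 8, 2 ^ j / 4)` fixed by `m`. Order `V` lexicographically by its clusters,
coarsest scale first, with the clusters of `v₀` first. If `u` and `v` are first separated at
scale `i`, everything ranked between them lies in their common cluster at scale `i + 1`, a ball
of radius `2 ^ i`, which the spreading constraints limit to `(8 * 2 ^ i) ^ d` points; so
`|q u - q v| ^ (1 / d) ≤ 8 * 2 ^ i`. Averaged over `(π, m)`, the cost `∑ 2 ^ j` of the scales
separating `u` and `v` is `O(log n) * dist u v`. Scales `2 ^ j ≤ 2 * dist u v` cost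
`O(dist u v)` in all. Above them, a separation is decided by a point `w` at rank `k` in distance
from `{u, v}` only if `w` precedes in `π` all points closer to `{u, v}`, which has probability
`1 / k`, and only at the three scales where the radius can fall between `dist w u` and
`dist w v`. Some `(π, m)` is at least as good as the average.
-/

open Finset

section Ranks

variable {V β : Type*} [Fintype V] [LinearOrder β]

def rankBy (f : V → β) (v : V) : ℕ := #{z | f z < f v}

theorem rankBy_lt_card (f : V → β) (v : V) : rankBy f v < Fintype.card V :=
  card_lt_univ_of_notMem (x := v) (by simp)

theorem rankBy_eq_zero {f : V → β} {v : V} (h : ∀ z, f v ≤ f z) : rankBy f v = 0 := by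
  simpa [rankBy] using h

theorem rankBy_add_card_filter [DecidableEq V] {f : V → β} {u v : V} (h : f u < f v) :
    rankBy f u + #{z | f u ≤ f z ∧ f z < f v} = rankBy f v := by
  rw [rankBy, rankBy, ← card_union_of_disjoint]
  · congr 1
    ext z
    simp only [mem_union, mem_filter, mem_univ, true_and]
    constructor
    · rintro (hz | hz)
      · exact hz.trans h
      · exact hz.2
    · intro hz
      exact (lt_or_ge (f z) (f u)).imp_right (⟨·, hz⟩)
  · exact disjoint_filter.mpr fun z _ hz hz' => (not_lt.mpr hz'.1) hz

theorem rankBy_injective [DecidableEq V] {f : V → β} (hf : Function.Injective f) :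
    Function.Injective (rankBy f) := by
  have hlt : ∀ {u v}, f u < f v → rankBy f u < rankBy f v := fun {u v} h => by
    rw [← rankBy_add_card_filter h, Nat.lt_add_right_iff_pos, card_pos]
    exact ⟨u, by simpa using h⟩
  intro u v huv
  by_contra hne
  rcases (hf.ne hne).lt_or_gt with h | h
  · exact (hlt h).ne huv
  · exact (hlt h).ne' huv

end Ranks

theorem sum_inv_card_filter_le_le_harmonic {ι β : Type*} [DecidableEq ι] [LinearOrder β]
    (f : ι → β) (s : Finset ι) :
    ∑ x ∈ s, ((#{z ∈ s | f z ≤ f x} : ℕ) : ℝ)⁻¹ ≤ harmonic #s := by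
  induction s using Finset.induction_on_max_value f with
  | empty => simp
  | insert a s ha hmax ih =>
    have htop : #{z ∈ insert a s | f z ≤ f a} = #s + 1 := by
      rw [filter_true_of_mem fun z hz => ?_, card_insert_of_notMem ha]
      rcases mem_insert.mp hz with rfl | hz
      exacts [le_rfl, hmax z hz]
    have hrest : ∀ x ∈ s, ((#{z ∈ insert a s | f z ≤ f x} : ℕ) : ℝ)⁻¹
        ≤ ((#{z ∈ s | f z ≤ f x} : ℕ) : ℝ)⁻¹ := fun x hx => by
      gcongr
      · exact Nat.cast_pos.mpr <| card_pos.mpr ⟨x, mem_filter.mpr ⟨hx, le_rfl⟩⟩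
      · exact subset_insert a s
    rw [sum_insert ha, htop, card_insert_of_notMem ha, harmonic_succ]
    push_cast
    linarith [sum_le_sum hrest]

section Priority

variable {α β : Type*} [LinearOrder β]

def firstIn (π : α ≃ β) (S : Finset α) (hS : S.Nonempty) : α :=
  π.symm ((S.image π).min' (hS.image π))

theorem eq_firstIn_iff {π : α ≃ β} {S : Finset α} {hS : S.Nonempty} {x : α} :
    x = firstIn π S hS ↔ x ∈ S ∧ ∀ z ∈ S, π x ≤ π z := by
  rw [firstIn, Equiv.eq_symm_apply, eq_comm, Finset.min'_eq_iff]
  simp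

theorem firstIn_mem (π : α ≃ β) (S : Finset α) (hS : S.Nonempty) : firstIn π S hS ∈ S :=
  (eq_firstIn_iff.mp rfl).1

theorem firstIn_le (π : α ≃ β) {S : Finset α} (hS : S.Nonempty) {z : α} (hz : z ∈ S) :
    π (firstIn π S hS) ≤ π z :=
  (eq_firstIn_iff.mp rfl).2 z hz

theorem firstIn_eq_iff {π : α ≃ β} {S : Finset α} {hS : S.Nonempty} {z : α} (hz : z ∈ S) :
    firstIn π S hS = z ↔ ∀ y ∈ S, y ≠ z → π z < π y := by
  rw [eq_comm, eq_firstIn_iff]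
  refine ⟨fun h y hy hyz => (h.2 y hy).lt_of_ne (π.injective.ne hyz.symm),
    fun h => ⟨hz, fun y hy => ?_⟩⟩
  rcases eq_or_ne y z with rfl | hyz
  exacts [le_rfl, (h y hy hyz).le]

theorem firstIn_eq_of_subset (π : α ≃ β) {S T : Finset α} (hS : S.Nonempty) (hT : T.Nonempty)
    (hST : S ⊆ T) (hmem : firstIn π T hT ∈ S) : firstIn π S hS = firstIn π T hT :=
  (eq_firstIn_iff.mpr ⟨hmem, fun _ hz => firstIn_le π hT (hST hz)⟩).symm

variable [DecidableEq α]

theorem forall_lt_swap_trans {S : Finset α} {w z : α} (hw : w ∈ S) (hz : z ∈ S)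
    {π : α ≃ β} (hπ : ∀ y ∈ S, y ≠ z → π z < π y) :
    ∀ y ∈ S, y ≠ w → ((Equiv.swap w z).trans π) w < ((Equiv.swap w z).trans π) y := by
  intro y hy hyw
  simp only [Equiv.trans_apply, Equiv.swap_apply_left]
  rcases eq_or_ne y z with rfl | hyz
  · rw [Equiv.swap_apply_right]
    exact hπ w hw (Ne.symm hyw)
  · rw [Equiv.swap_apply_of_ne_of_ne hyw hyz]
    exact hπ y hy hyz

variable [Fintype α] [Fintype β]

/-- Composing with a transposition, each element of `S` is first in equally many orders. -/
theorem card_filter_forall_lt_mul_card {S : Finset α} {w : α} (hw : w ∈ S) :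
    #{π : α ≃ β | ∀ z ∈ S, z ≠ w → π w < π z} * #S = Fintype.card (α ≃ β) := by
  have hS : S.Nonempty := ⟨w, hw⟩
  have hfiber : ∀ z ∈ S, #{π : α ≃ β | firstIn π S hS = z} =
      #{π : α ≃ β | ∀ y ∈ S, y ≠ w → π w < π y} := by
    intro z hz
    simp_rw [firstIn_eq_iff hz]
    refine card_nbij' ((Equiv.swap w z).trans ·) ((Equiv.swap w z).trans ·) ?_ ?_ ?_ ?_
    · intro π hπ
      simpa using forall_lt_swap_trans hw hz (by simpa using hπ)
    · intro π hπ
      rw [Equiv.swap_comm]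
      simpa using forall_lt_swap_trans hz hw (by simpa using hπ)
    all_goals intro π _; ext; simp
  rw [← card_univ, card_eq_sum_card_fiberwise (s := univ) (fun π _ => firstIn_mem π S hS),
    sum_congr rfl hfiber, sum_const, smul_eq_mul, mul_comm]

end Priority

theorem sum_card_filter_forall_lt_le {α β γ : Type*} [Fintype α] [DecidableEq α] [LinearOrder β]
    [Fintype β] [LinearOrder γ] (f : α → γ) :
    ∑ w, (#{π : α ≃ β | ∀ z, f z ≤ f w → z ≠ w → π w < π z} : ℝ)
      ≤ Fintype.card (α ≃ β) * (1 + Real.log (Fintype.card α)) := by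
  have hterm : ∀ w, (#{π : α ≃ β | ∀ z, f z ≤ f w → z ≠ w → π w < π z} : ℝ)
      = Fintype.card (α ≃ β) * ((#{z | f z ≤ f w} : ℕ) : ℝ)⁻¹ := fun w => by
    have hw : w ∈ ({z | f z ≤ f w} : Finset α) := by simp
    rw [← card_filter_forall_lt_mul_card (β := β) hw]
    push_cast
    rw [mul_inv_cancel_right₀ (by exact_mod_cast (card_pos.mpr ⟨w, hw⟩).ne')]
    simp
  calc ∑ w, (#{π : α ≃ β | ∀ z, f z ≤ f w → z ≠ w → π w < π z} : ℝ)
      = Fintype.card (α ≃ β) * ∑ w, ((#{z | f z ≤ f w} : ℕ) : ℝ)⁻¹ := by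
        rw [mul_sum]; exact sum_congr rfl fun w _ => hterm w
    _ ≤ Fintype.card (α ≃ β) * (1 + Real.log (Fintype.card α)) := by
        gcongr
        exact (sum_inv_card_filter_le_le_harmonic f univ).trans (harmonic_le_one_add_log _)

theorem Nat.drop_eq_of_ofDigits_le_of_le {b m : ℕ} (hb : 1 < b) {l l₁ l₂ : List ℕ}
    (hlen : l.length = l₁.length) (hl : ∀ x ∈ l, x < b) (hl₁ : ∀ x ∈ l₁, x < b)
    (hl₂ : ∀ x ∈ l₂, x < b) (hdrop : l₁.drop m = l₂.drop m)
    (h₁ : Nat.ofDigits b l₁ ≤ Nat.ofDigits b l) (h₂ : Nat.ofDigits b l ≤ Nat.ofDigits b l₂) :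
    l.drop m = l₁.drop m := by
  have hdiv := fun (l' : List ℕ) (h' : ∀ x ∈ l', x < b) =>
    Nat.ofDigits_div_pow_eq_ofDigits_drop m (by omega) l' h'
  have hle₁ := Nat.div_le_div_right (c := b ^ m) h₁
  have hle₂ := Nat.div_le_div_right (c := b ^ m) h₂
  rw [hdiv l hl, hdiv l₁ hl₁] at hle₁
  rw [hdiv l hl, hdiv l₂ hl₂, ← hdrop] at hle₂
  exact Nat.ofDigits_inj_of_len_eq hb (by simp [hlen])
    (fun x hx => hl x (List.mem_of_mem_drop hx)) (fun x hx => hl₁ x (List.mem_of_mem_drop hx))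
    (le_antisymm hle₂ hle₁)

theorem List.drop_map_range {α : Type*} (f : ℕ → α) (m L : ℕ) :
    ((List.range (L + 1)).map f).drop m = (List.range' m (L + 1 - m)).map f := by
  rw [List.range_eq_range', ← List.map_drop, List.drop_range']
  simp

section LevelKey

variable {V : Type*} {B L : ℕ} {g : ℕ → V → ℕ}

/-- The base-`B` number with digits `g 0 v, …, g L v`; the coarsest level `L` is the most
significant digit. -/
def levelKey (B L : ℕ) (g : ℕ → V → ℕ) (v : V) : ℕ :=
  Nat.ofDigits B ((List.range (L + 1)).map fun j => g j v)

theorem levelKey_eq_zero {v : V} (h : ∀ j, g j v = 0) : levelKey B L g v = 0 := by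
  simp only [levelKey, h]
  induction List.range (L + 1) <;> simp_all [Nat.ofDigits_cons]

theorem levelKey_injective (hB : 1 < B) (hg : ∀ j v, g j v < B)
    (h₀ : Function.Injective (g 0)) : Function.Injective (levelKey B L g) := by
  intro u v huv
  have hdigits := Nat.ofDigits_inj_of_len_eq hB (by simp) (by simp [hg]) (by simp [hg]) huv
  exact h₀ (List.map_inj_left.mp hdigits 0 (by simp))

theorem level_eq_of_levelKey_le_of_le (hB : 1 < B) (hg : ∀ j v, g j v < B) {u v z : V} {m : ℕ}
    (hm : m ≤ L) (huv : ∀ j, m ≤ j → j ≤ L → g j u = g j v)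
    (h₁ : levelKey B L g u ≤ levelKey B L g z) (h₂ : levelKey B L g z ≤ levelKey B L g v) :
    g m z = g m u := by
  have hagree : ((List.range (L + 1)).map fun j => g j u).drop m
      = ((List.range (L + 1)).map fun j => g j v).drop m := by
    simp only [List.drop_map_range]
    exact List.map_congr_left fun j hj => huv j (List.mem_range'_1.mp hj).1 (by
      have := (List.mem_range'_1.mp hj).2; omega)
  have hdrop := Nat.drop_eq_of_ofDigits_le_of_le hB (by simp) (by simp [hg]) (by simp [hg])
    (by simp [hg]) hagree h₁ h₂
  simp only [List.drop_map_range] at hdrop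
  exact List.map_inj_left.mp hdrop m (List.mem_range'_1.mpr ⟨le_rfl, by omega⟩)

end LevelKey

section Spreading

variable {V : Type*} [DecidableEq V] {d : ℕ} {dist : V → V → ℝ}

theorem Spreading.quarter_le_dist (hm : IsMetric dist) (hs : Spreading d dist) {u v : V}
    (huv : u ≠ v) : 1 / 4 ≤ dist u v := by
  have h := hs {u, v} u (mem_insert_self u _)
  rw [card_pair huv, sum_pair huv, hm.1 u] at h
  norm_num at h
  linarith

theorem Spreading.card_sub_one_le (hd : 1 ≤ d) (hm : IsMetric dist) (hs : Spreading d dist)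
    {S : Finset V} {u : V} {r : ℝ} (hu : u ∈ S) (hS : ∀ z ∈ S, dist u z ≤ r) :
    (#S : ℝ) - 1 ≤ (4 * r) ^ d := by
  have hr : 0 ≤ r := hm.1 u ▸ hS u hu
  set k : ℝ := (#S : ℝ) - 1
  have hk' : k = (#(S.erase u) : ℝ) := by
    rw [card_erase_of_mem hu, Nat.cast_pred (card_pos.mpr ⟨u, hu⟩)]
  have hsum : ∑ z ∈ S, dist u z ≤ k * r := by
    rw [← sum_erase S (hm.1 u), hk', ← nsmul_eq_mul]
    exact sum_le_card_nsmul _ _ _ fun z hz => hS z (mem_of_mem_erase hz)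
  have hk0 : 0 ≤ k := hk' ▸ Nat.cast_nonneg _
  rcases hk0.eq_or_lt with hk0 | hkpos
  · rw [← hk0]; positivity
  have hroot : k ^ ((1 : ℝ) / d) ≤ 4 * r := by
    have h := (hs S u hu).trans hsum
    rw [Real.rpow_add hkpos, Real.rpow_one] at h
    nlinarith
  have hd0 : d ≠ 0 := by omega
  calc k = (k ^ ((1 : ℝ) / d)) ^ d := by
        rw [one_div, Real.rpow_inv_natCast_pow hk0 hd0]
    _ ≤ (4 * r) ^ d := by gcongr

theorem Spreading.card_filter_dist_le [Fintype V] (hd : 1 ≤ d) (hm : IsMetric dist)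
    (hs : Spreading d dist) (u : V) {r : ℝ} (hr : 1 / 4 ≤ r) :
    (#{z | dist z u ≤ r} : ℝ) ≤ (8 * r) ^ d := by
  have hu : u ∈ ({z | dist z u ≤ r} : Finset V) := by
    rw [mem_filter, hm.1 u]
    exact ⟨mem_univ u, by linarith⟩
  have h := hs.card_sub_one_le hd hm hu fun z hz => by rw [hm.2.2.1]; simpa using hz
  have h1 : 1 ≤ (4 * r) ^ d := one_le_pow₀ (by linarith)
  have h2 : (2 : ℝ) ≤ 2 ^ d := le_self_pow₀ (by norm_num) (by omega)
  calc (#{z | dist z u ≤ r} : ℝ) ≤ 2 * (4 * r) ^ d := by linarith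
    _ ≤ 2 ^ d * (4 * r) ^ d := by gcongr
    _ = (8 * r) ^ d := by rw [← mul_pow]; ring_nf

end Spreading

section Hierarchy

variable {V : Type*} [Fintype V] [DecidableEq V] {d B L : ℕ} {dist : V → V → ℝ}
  {g : ℕ → V → ℕ}

theorem abs_rankBy_levelKey_sub_rpow_le (hd : 1 ≤ d) (hm : IsMetric dist)
    (hs : Spreading d dist) (hB : 1 < B) (hg : ∀ j v, g j v < B)
    (h₀ : Function.Injective (g 0)) (hL : ∀ u v, g L u = g L v)
    (hdiam : ∀ j ≤ L, ∀ u z, g j z = g j u → dist z u ≤ 2 ^ j / 2) (u v : V) :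
    |(rankBy (levelKey B L g) u : ℝ) - rankBy (levelKey B L g) v| ^ ((1 : ℝ) / d)
      ≤ 8 * ∑ j ∈ range (L + 1) with g j u ≠ g j v, (2 : ℝ) ^ j := by
  set K := levelKey B L g
  rcases eq_or_ne u v with rfl | huv
  · simp [Real.zero_rpow (by positivity : ((d : ℝ))⁻¹ ≠ 0)]
  wlog hlt : K u < K v generalizing u v
  · have := this v u huv.symm (((levelKey_injective hB hg h₀).ne huv).lt_or_gt.resolve_left hlt)
    rw [abs_sub_comm]
    simpa only [ne_comm] using this
  set i := Nat.findGreatest (fun j => g j u ≠ g j v) L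
  have hi : g i u ≠ g i v :=
    Nat.findGreatest_spec (P := fun j => g j u ≠ g j v) (Nat.zero_le L) (h₀.ne huv)
  have hiL : i < L :=
    (Nat.findGreatest_le L).lt_of_ne fun (h : i = L) => hi (by rw [h]; exact hL u v)
  have hball : ∀ z, K u ≤ K z → K z < K v → dist z u ≤ 2 ^ i := fun z h₁ h₂ => by
    have hagree : ∀ j, i + 1 ≤ j → j ≤ L → g j u = g j v := fun j hj hjL =>
      not_not.mp (Nat.findGreatest_is_greatest hj hjL)
    have := hdiam (i + 1) hiL u z (level_eq_of_levelKey_le_of_le hB hg hiL hagree h₁ h₂.le)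
    rwa [pow_succ, mul_div_assoc, div_self two_ne_zero, mul_one] at this
  have hcard : (#{z | K u ≤ K z ∧ K z < K v} : ℝ) ≤ (8 * 2 ^ i) ^ d :=
    calc (#{z | K u ≤ K z ∧ K z < K v} : ℝ) ≤ #{z | dist z u ≤ 2 ^ i} := by
          refine Nat.cast_le.mpr (card_le_card fun z => ?_)
          simp only [mem_filter, mem_univ, true_and]
          exact fun hz => hball z hz.1 hz.2
      _ ≤ (8 * 2 ^ i) ^ d :=
          hs.card_filter_dist_le hd hm u (by linarith [one_le_pow₀ (M₀ := ℝ) one_le_two (n := i)])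
  calc |(rankBy K u : ℝ) - rankBy K v| ^ ((1 : ℝ) / d)
      = (#{z | K u ≤ K z ∧ K z < K v} : ℝ) ^ ((1 : ℝ) / d) := by
        rw [← rankBy_add_card_filter hlt]
        push_cast
        rw [sub_add_cancel_left, abs_neg, Nat.abs_cast]
    _ ≤ ((8 * 2 ^ i) ^ d) ^ ((1 : ℝ) / d) := by gcongr
    _ = 8 * 2 ^ i := by rw [one_div, Real.pow_rpow_inv_natCast (by positivity) (by omega)]
    _ ≤ 8 * ∑ j ∈ range (L + 1) with g j u ≠ g j v, (2 : ℝ) ^ j := by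
        gcongr
        exact single_le_sum (fun j _ => by positivity)
          (mem_filter.mpr ⟨mem_range.mpr (by omega), hi⟩)

end Hierarchy

section Clustering

variable {V β : Type*} [Fintype V] [DecidableEq V] [LinearOrder β] {dist : V → V → ℝ}

/-- `insert v` only matters for `r < 0`, where it keeps the ball nonempty. -/
noncomputable def ballFinset (dist : V → V → ℝ) (v : V) (r : ℝ) : Finset V :=
  insert v ({z | dist z v ≤ r} : Finset V)

theorem mem_ballFinset (hm : IsMetric dist) {v z : V} {r : ℝ} (hr : 0 ≤ r) :
    z ∈ ballFinset dist v r ↔ dist z v ≤ r := by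
  simp only [ballFinset, mem_insert, mem_filter, mem_univ, true_and]
  exact ⟨by rintro (rfl | h); exacts [hm.1 z ▸ hr, h], Or.inr⟩

/-- The clustering of Calinescu, Karloff and Rabani at radius `r` with priorities `π`. -/
noncomputable def clusterCenter (dist : V → V → ℝ) (π : V ≃ β) (r : ℝ) (v : V) : V :=
  firstIn π (ballFinset dist v r) (insert_nonempty _ _)

theorem dist_clusterCenter_le (hm : IsMetric dist) (π : V ≃ β) {r : ℝ} (hr : 0 ≤ r) (v : V) :
    dist (clusterCenter dist π r v) v ≤ r :=
  (mem_ballFinset hm hr).mp (firstIn_mem _ _ _)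

theorem clusterCenter_eq_self (hm : IsMetric dist) (π : V ≃ β) {r : ℝ} (hr : 0 ≤ r)
    (hsep : ∀ x y, x ≠ y → r < dist x y) (v : V) : clusterCenter dist π r v = v := by
  by_contra h
  exact (dist_clusterCenter_le hm π hr v).not_gt (hsep _ _ h)

theorem clusterCenter_eq_of_forall_dist_le (hm : IsMetric dist) (π : V ≃ β) {r : ℝ}
    (hr : ∀ x y, dist x y ≤ r) (u v : V) : clusterCenter dist π r u = clusterCenter dist π r v := by
  have hmem : ∀ x z, z ∈ ballFinset dist x r := fun x z =>
    (mem_ballFinset hm (hm.1 x ▸ hr x x)).mpr (hr z x)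
  exact π.injective (le_antisymm (firstIn_le π _ (hmem u _)) (firstIn_le π _ (hmem v _)))

/-- The witness is the `π`-first point of the union of the two balls. -/
theorem exists_witness_of_clusterCenter_ne (hm : IsMetric dist) (π : V ≃ β) {r : ℝ}
    (hr : 0 ≤ r) {u v : V} (h : clusterCenter dist π r u ≠ clusterCenter dist π r v) :
    ∃ w, min (dist w u) (dist w v) ≤ r ∧ r < max (dist w u) (dist w v) ∧
      ∀ z, min (dist z u) (dist z v) ≤ min (dist w u) (dist w v) → z ≠ w → π w < π z := by
  have hU : (ballFinset dist u r ∪ ballFinset dist v r).Nonempty :=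
    (insert_nonempty _ _).mono subset_union_left
  have hmem : ∀ z, z ∈ ballFinset dist u r ∪ ballFinset dist v r ↔
      min (dist z u) (dist z v) ≤ r := fun z => by
    rw [mem_union, mem_ballFinset hm hr, mem_ballFinset hm hr, min_le_iff]
  set w := firstIn π _ hU
  have hw : min (dist w u) (dist w v) ≤ r := (hmem w).mp (firstIn_mem π _ hU)
  refine ⟨w, hw, ?_, fun z hz hzw =>
    (firstIn_le π hU ((hmem z).mpr (hz.trans hw))).lt_of_ne (π.injective.ne hzw.symm)⟩
  by_contra! hle
  have hwu := (mem_ballFinset hm hr).mpr ((le_max_left _ _).trans hle)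
  have hwv := (mem_ballFinset hm hr).mpr ((le_max_right _ _).trans hle)
  exact h ((firstIn_eq_of_subset π _ hU subset_union_left hwu).trans
    (firstIn_eq_of_subset π _ hU subset_union_right hwv).symm)

end Clustering

section ClusterOrder

variable {V : Type*} [Fintype V] [DecidableEq V] {N : ℕ} {dist : V → V → ℝ}

/-- Label `0` is reserved for the cluster of `v₀`, so that `v₀` gets the smallest key. -/
noncomputable def clusterLabel (dist : V → V → ℝ) (π : V ≃ Fin N) (v₀ : V) (r : ℝ) (v : V) : ℕ :=
  if clusterCenter dist π r v = clusterCenter dist π r v₀ then 0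
  else π (clusterCenter dist π r v) + 1

theorem clusterLabel_lt (π : V ≃ Fin N) (v₀ : V) (r : ℝ) (v : V) :
    clusterLabel dist π v₀ r v < N + 1 := by
  unfold clusterLabel
  split_ifs <;> omega

theorem clusterLabel_self (π : V ≃ Fin N) (v₀ : V) (r : ℝ) : clusterLabel dist π v₀ r v₀ = 0 :=
  if_pos rfl

theorem clusterLabel_eq_iff (π : V ≃ Fin N) (v₀ : V) (r : ℝ) (u v : V) :
    clusterLabel dist π v₀ r u = clusterLabel dist π v₀ r v ↔
      clusterCenter dist π r u = clusterCenter dist π r v := by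
  unfold clusterLabel
  split_ifs with hu hv hv
  · simp [hu, hv]
  · simpa [hu] using Ne.symm hv
  · simpa [hv] using hu
  · simp [Fin.val_inj]

noncomputable def shiftedRadius (M m j : ℕ) : ℝ := (M + m) * 2 ^ j / (8 * M)

theorem shiftedRadius_nonneg (M m j : ℕ) : 0 ≤ shiftedRadius M m j := by
  unfold shiftedRadius
  positivity

theorem shiftedRadius_mem {M m : ℕ} (hm : m < M) (j : ℕ) :
    2 ^ j / 8 ≤ shiftedRadius M m j ∧ shiftedRadius M m j < 2 ^ j / 4 := by
  have hM : (0 : ℝ) < M := by exact_mod_cast (Nat.zero_le m).trans_lt hm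
  have hmM : (m : ℝ) < M := by exact_mod_cast hm
  unfold shiftedRadius
  constructor
  · rw [div_le_div_iff₀ (by norm_num) (by positivity)]
    nlinarith [pow_pos (two_pos (α := ℝ)) j, (Nat.cast_nonneg m : (0 : ℝ) ≤ m)]
  · rw [div_lt_div_iff₀ (by positivity) (by norm_num)]
    nlinarith [pow_pos (two_pos (α := ℝ)) j]

noncomputable def clusterOrder (dist : V → V → ℝ) (π : V ≃ Fin N) (v₀ : V) (M m L : ℕ) :
    V → ℕ :=
  rankBy (levelKey (N + 1) L fun j => clusterLabel dist π v₀ (shiftedRadius M m j))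

theorem clusterOrder_base (π : V ≃ Fin N) (v₀ : V) (M m L : ℕ) :
    clusterOrder dist π v₀ M m L v₀ = 0 := by
  refine rankBy_eq_zero fun z => ?_
  rw [levelKey_eq_zero fun j => clusterLabel_self π v₀ _]
  exact Nat.zero_le _

variable {d : ℕ} {M m L : ℕ}

theorem clusterLabel_zero_injective (hm : IsMetric dist) (hs : Spreading d dist)
    (π : V ≃ Fin N) (v₀ : V) (hmM : m < M) :
    Function.Injective (clusterLabel dist π v₀ (shiftedRadius M m 0)) := by
  have hself := clusterCenter_eq_self hm π (shiftedRadius_nonneg M m 0) fun x y hxy =>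
    (shiftedRadius_mem hmM 0).2.trans_le (by simpa using hs.quarter_le_dist hm hxy)
  intro u v huv
  rwa [clusterLabel_eq_iff, hself, hself] at huv

theorem clusterOrder_injective (hm : IsMetric dist) (hs : Spreading d dist) (π : V ≃ Fin N)
    (v₀ : V) (hmM : m < M) : Function.Injective (clusterOrder dist π v₀ M m L) :=
  fun u _ huv => rankBy_injective
    (levelKey_injective (g := fun j => clusterLabel dist π v₀ (shiftedRadius M m j)) (L := L)
      (Nat.lt_add_of_pos_left (π u).pos) (fun _ _ => clusterLabel_lt π v₀ _ _)
      (clusterLabel_zero_injective hm hs π v₀ hmM)) huv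

theorem abs_clusterOrder_sub_rpow_le (hd : 1 ≤ d) (hm : IsMetric dist) (hs : Spreading d dist)
    (π : V ≃ Fin N) (v₀ : V) (hmM : m < M) (hL : ∀ x y, dist x y ≤ 2 ^ L / 8) (u v : V) :
    |(clusterOrder dist π v₀ M m L u : ℝ) - clusterOrder dist π v₀ M m L v| ^ ((1 : ℝ) / d)
      ≤ 8 * ∑ j ∈ range (L + 1) with clusterCenter dist π (shiftedRadius M m j) u ≠
        clusterCenter dist π (shiftedRadius M m j) v, (2 : ℝ) ^ j := by
  have hdiam : ∀ j ≤ L, ∀ u z, clusterLabel dist π v₀ (shiftedRadius M m j) z =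
      clusterLabel dist π v₀ (shiftedRadius M m j) u → dist z u ≤ 2 ^ j / 2 := by
    intro j _ u z h
    rw [clusterLabel_eq_iff] at h
    have hz := dist_clusterCenter_le hm π (shiftedRadius_nonneg M m j) z
    have hu := dist_clusterCenter_le hm π (shiftedRadius_nonneg M m j) u
    rw [h] at hz
    linarith [hm.2.2.2.1 z (clusterCenter dist π (shiftedRadius M m j) u) u,
      hm.2.2.1 z (clusterCenter dist π (shiftedRadius M m j) u), (shiftedRadius_mem hmM j).2]
  have htop : ∀ u v, clusterLabel dist π v₀ (shiftedRadius M m L) u =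
      clusterLabel dist π v₀ (shiftedRadius M m L) v := fun u v =>
    (clusterLabel_eq_iff π v₀ _ u v).mpr <| clusterCenter_eq_of_forall_dist_le hm π
      (fun x y => (hL x y).trans (shiftedRadius_mem hmM L).1) u v
  have := abs_rankBy_levelKey_sub_rpow_le
    (g := fun j => clusterLabel dist π v₀ (shiftedRadius M m j)) hd hm hs
    (Nat.lt_add_of_pos_left (π u).pos) (fun _ _ => clusterLabel_lt π v₀ _ _)
    (clusterLabel_zero_injective hm hs π v₀ hmM) htop hdiam u v
  rwa [filter_congr fun j _ => (clusterLabel_eq_iff π v₀ (shiftedRadius M m j) u v).not] at this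

end ClusterOrder

section Scales

theorem card_filter_range_le_sub_add_one (M : ℕ) {x y : ℝ} (hxy : x ≤ y) :
    (#((range M).filter fun m : ℕ => x ≤ m ∧ (m : ℝ) < y) : ℝ) ≤ y - x + 1 := by
  rcases lt_or_ge y 0 with hy | hy
  · rw [filter_false_of_mem fun m _ hm => (hm.2.trans hy).not_ge (Nat.cast_nonneg m)]
    rw [card_empty, Nat.cast_zero]
    linarith
  have hsub : ((range M).filter fun m : ℕ => x ≤ m ∧ (m : ℝ) < y) ⊆ Ico ⌈x⌉₊ ⌈y⌉₊ :=
      fun m hm => by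
    simp only [mem_filter] at hm
    rw [mem_Ico]
    exact ⟨Nat.ceil_le.mpr hm.2.1, Nat.lt_ceil.mpr hm.2.2⟩
  have hcard := Nat.cast_le (α := ℝ).mpr ((card_le_card hsub).trans_eq (Nat.card_Ico _ _))
  have hx := Nat.le_ceil x
  have hy' := Nat.ceil_lt_add_one hy
  rcases le_total ⌈x⌉₊ ⌈y⌉₊ with h | h
  · rw [Nat.cast_sub h] at hcard; linarith
  · rw [Nat.sub_eq_zero_of_le h, Nat.cast_zero] at hcard; linarith

theorem sum_filter_two_pow_le {s : Finset ℕ} {x : ℝ} (hx : 0 ≤ x) :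
    ∑ j ∈ s with (2 : ℝ) ^ j ≤ x, (2 : ℝ) ^ j ≤ 2 * x := by
  rcases (s.filter fun j => (2 : ℝ) ^ j ≤ x).eq_empty_or_nonempty with h | h
  · rw [h, sum_empty]; positivity
  have hk := (mem_filter.mp (max'_mem _ h)).2
  have hlt : ∑ j ∈ s with (2 : ℝ) ^ j ≤ x, (2 : ℝ) ^ j < 2 ^ ((s.filter _).max' h + 1) := by
    exact_mod_cast Nat.geomSum_lt le_rfl fun j hj => Nat.lt_succ_of_le (le_max' _ j hj)
  rw [pow_succ] at hlt
  linarith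

theorem card_filter_two_pow_mem_Ioo_le_three (s : Finset ℕ) (A : ℝ) :
    #{j ∈ s | A < 2 ^ j ∧ (2 : ℝ) ^ j < 8 * A} ≤ 3 := by
  rcases (s.filter fun j => A < 2 ^ j ∧ (2 : ℝ) ^ j < 8 * A).eq_empty_or_nonempty with h | h
  · rw [h, card_empty]; norm_num
  set k := (s.filter _).min' h
  have hk := (mem_filter.mp (min'_mem _ h)).2.1
  calc #{j ∈ s | A < 2 ^ j ∧ (2 : ℝ) ^ j < 8 * A} ≤ #(Ico k (k + 3)) := by
        refine card_le_card fun j hj => mem_Ico.mpr ⟨min'_le _ j hj, ?_⟩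
        by_contra! hj3
        have h8 : (2 : ℝ) ^ (k + 3) ≤ 2 ^ j := pow_le_pow_right₀ one_le_two hj3
        rw [pow_add] at h8
        linarith [(mem_filter.mp hj).2.2]
    _ = 3 := by simp

theorem card_filter_shiftedRadius_mem_mul_le {M : ℕ} (hM : 0 < M) (j : ℕ) {a b : ℝ}
    (hab : a ≤ b) :
    (#{m ∈ range M | a ≤ shiftedRadius M m j ∧ shiftedRadius M m j < b} : ℝ) * 2 ^ j
      ≤ 8 * M * (b - a) + 2 ^ j := by
  set c : ℝ := 8 * M / 2 ^ j
  have hc : 0 < c := by positivity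
  have hρ : ∀ m : ℕ, shiftedRadius M m j = (M + m) / c := fun m => by
    unfold shiftedRadius c
    field_simp
  have hcount := card_filter_range_le_sub_add_one M (x := c * a - M) (y := c * b - M)
    (by nlinarith)
  have hfilter : {m ∈ range M | a ≤ shiftedRadius M m j ∧ shiftedRadius M m j < b}
      = (range M).filter fun m : ℕ => c * a - M ≤ m ∧ (m : ℝ) < c * b - M :=
    filter_congr fun m _ => by
      rw [hρ, le_div_iff₀ hc, div_lt_iff₀ hc, sub_le_iff_le_add', lt_sub_iff_add_lt', mul_comm a,
        mul_comm b]
  calc (#{m ∈ range M | a ≤ shiftedRadius M m j ∧ shiftedRadius M m j < b} : ℝ) * 2 ^ j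
      ≤ (c * b - M - (c * a - M) + 1) * 2 ^ j := by rw [hfilter]; gcongr
    _ = 8 * M * (b - a) + 2 ^ j := by unfold c; field_simp; ring

/-- Only three scales above `2 * t` can put the radius in `[a, b)`. -/
theorem sum_two_pow_mul_card_filter_shiftedRadius_le {L M : ℕ} (hM : 16 * 2 ^ L ≤ M)
    {a b t : ℝ} (hab : a ≤ b) (hbt : b ≤ a + t) (ht : 1 / 4 ≤ t) :
    ∑ j ∈ range (L + 1) with 2 * t < 2 ^ j, (2 : ℝ) ^ j *
        #{m ∈ range M | a ≤ shiftedRadius M m j ∧ shiftedRadius M m j < b}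
      ≤ 27 * M * t := by
  set f : ℕ → ℝ := fun j =>
    2 ^ j * #{m ∈ range M | a ≤ shiftedRadius M m j ∧ shiftedRadius M m j < b}
  set S := {j ∈ range (L + 1) | 2 * t < 2 ^ j}
  set A := max (4 * a) (2 * t)
  have hM' : (16 : ℝ) * 2 ^ L ≤ M := by exact_mod_cast hM
  have hwindow : ∀ j ∈ S, f j ≠ 0 → A < 2 ^ j ∧ 2 ^ j < 8 * A := by
    intro j hj hfj
    obtain ⟨m, hm⟩ : {m ∈ range M | a ≤ shiftedRadius M m j ∧ shiftedRadius M m j < b}.Nonempty :=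
      nonempty_of_ne_empty fun h => hfj (by simp [f, h])
    simp only [S, mem_filter, mem_range] at hm hj
    have hρ := shiftedRadius_mem hm.1 j
    have hA : 4 * a ≤ A ∧ 2 * t ≤ A := ⟨le_max_left _ _, le_max_right _ _⟩
    exact ⟨max_lt (by linarith) hj.2, by linarith⟩
  have hterm : ∀ j ∈ S, f j ≤ 9 * M * t := by
    intro j hj
    simp only [S, mem_filter, mem_range] at hj
    have hjL : (2 : ℝ) ^ j ≤ 2 ^ L := pow_le_pow_right₀ one_le_two (by omega)
    have := card_filter_shiftedRadius_mem_mul_le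
      ((by positivity : 0 < 16 * 2 ^ L).trans_le hM) j hab
    simp only [f]
    nlinarith
  calc ∑ j ∈ S, f j = ∑ j ∈ S with A < 2 ^ j ∧ 2 ^ j < 8 * A, f j :=
        (sum_filter_of_ne hwindow).symm
    _ ≤ #{j ∈ S | A < 2 ^ j ∧ (2 : ℝ) ^ j < 8 * A} * (9 * M * t) :=
        (sum_le_card_nsmul _ _ _ fun j hj => hterm j (mem_filter.mp hj).1).trans_eq
          (nsmul_eq_mul _ _)
    _ ≤ 3 * (9 * M * t) := by
        gcongr
        exact_mod_cast card_filter_two_pow_mem_Ioo_le_three _ A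
    _ = 27 * M * t := by ring

end Scales

theorem sum_sum_filter_eq_sum_mul_card {ι κ : Type*} (s : Finset ι) (t : Finset κ)
    (p : ι → κ → Prop) [∀ i j, Decidable (p i j)] (f : κ → ℝ) :
    ∑ i ∈ s, ∑ j ∈ t with p i j, f j = ∑ j ∈ t, f j * #{i ∈ s | p i j} := by
  simp only [sum_filter]
  rw [sum_comm]
  refine sum_congr rfl fun j _ => ?_
  rw [← sum_filter, sum_const, nsmul_eq_mul, mul_comm]

theorem max_le_min_add {x y t : ℝ} (hxy : x ≤ y + t) (hyx : y ≤ x + t) :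
    max x y ≤ min x y + t := by
  rcases le_total x y with h | h
  · rw [max_eq_right h, min_eq_left h]; exact hyx
  · rw [max_eq_left h, min_eq_right h]; exact hxy

section Separation

variable {V : Type*} [Fintype V] [DecidableEq V] {N : ℕ} {dist : V → V → ℝ}

/-- Each separation is charged to its witness from `exists_witness_of_clusterCenter_ne`. -/
theorem card_filter_clusterCenter_ne_le (hm : IsMetric dist) (M j : ℕ) (u v : V) :
    (#{ω ∈ (univ : Finset (V ≃ Fin N)) ×ˢ range M |
        clusterCenter dist ω.1 (shiftedRadius M ω.2 j) u ≠
          clusterCenter dist ω.1 (shiftedRadius M ω.2 j) v} : ℝ)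
      ≤ ∑ w, (#{π : V ≃ Fin N | ∀ z, min (dist z u) (dist z v) ≤ min (dist w u) (dist w v) →
            z ≠ w → π w < π z} : ℝ) *
          #{m ∈ range M | min (dist w u) (dist w v) ≤ shiftedRadius M m j ∧
            shiftedRadius M m j < max (dist w u) (dist w v)} := by
  have hsub : {ω ∈ (univ : Finset (V ≃ Fin N)) ×ˢ range M |
      clusterCenter dist ω.1 (shiftedRadius M ω.2 j) u ≠
        clusterCenter dist ω.1 (shiftedRadius M ω.2 j) v} ⊆ univ.biUnion fun w =>
      ({π : V ≃ Fin N | ∀ z, min (dist z u) (dist z v) ≤ min (dist w u) (dist w v) →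
          z ≠ w → π w < π z} : Finset _) ×ˢ
        {m ∈ range M | min (dist w u) (dist w v) ≤ shiftedRadius M m j ∧
          shiftedRadius M m j < max (dist w u) (dist w v)} := by
    rintro ⟨π, m⟩ hω
    simp only [mem_filter, mem_product, mem_univ, true_and] at hω
    obtain ⟨w, hw₁, hw₂, hw₃⟩ :=
      exists_witness_of_clusterCenter_ne hm π (shiftedRadius_nonneg M m j) hω.2
    simp only [mem_biUnion, mem_product, mem_filter, mem_univ, true_and]
    exact ⟨w, hw₃, hω.1, hw₁, hw₂⟩
  calc _ ≤ (#(univ.biUnion _) : ℝ) := by exact_mod_cast card_le_card hsub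
    _ ≤ _ := by exact_mod_cast card_biUnion_le.trans_eq (by simp only [card_product])

theorem sum_two_pow_mul_card_filter_clusterCenter_ne_le (hm : IsMetric dist) {L M : ℕ}
    (hM : 16 * 2 ^ L ≤ M) {u v : V} (huv : 1 / 4 ≤ dist u v) :
    ∑ j ∈ range (L + 1) with 2 * dist u v < 2 ^ j, (2 : ℝ) ^ j *
        #{ω ∈ (univ : Finset (V ≃ Fin N)) ×ˢ range M |
          clusterCenter dist ω.1 (shiftedRadius M ω.2 j) u ≠
            clusterCenter dist ω.1 (shiftedRadius M ω.2 j) v}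
      ≤ 27 * (Fintype.card (V ≃ Fin N) * M) * (1 + Real.log (Fintype.card V)) * dist u v := by
  set P : V → ℝ := fun w => #{π : V ≃ Fin N | ∀ z, min (dist z u) (dist z v) ≤
    min (dist w u) (dist w v) → z ≠ w → π w < π z}
  set R : V → ℕ → ℝ := fun w j => #{m ∈ range M | min (dist w u) (dist w v) ≤
    shiftedRadius M m j ∧ shiftedRadius M m j < max (dist w u) (dist w v)}
  have hring : ∀ w, ∑ j ∈ range (L + 1) with 2 * dist u v < 2 ^ j, (2 : ℝ) ^ j * R w j
      ≤ 27 * M * dist u v := fun w =>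
    sum_two_pow_mul_card_filter_shiftedRadius_le hM min_le_max
      (max_le_min_add (by linarith [hm.2.2.2.1 w v u, hm.2.2.1 u v])
        (by linarith [hm.2.2.2.1 w u v])) huv
  calc ∑ j ∈ range (L + 1) with 2 * dist u v < 2 ^ j, (2 : ℝ) ^ j *
        #{ω ∈ (univ : Finset (V ≃ Fin N)) ×ˢ range M |
          clusterCenter dist ω.1 (shiftedRadius M ω.2 j) u ≠
            clusterCenter dist ω.1 (shiftedRadius M ω.2 j) v}
      ≤ ∑ j ∈ range (L + 1) with 2 * dist u v < 2 ^ j, (2 : ℝ) ^ j * ∑ w, P w * R w j := by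
        gcongr with j
        exact card_filter_clusterCenter_ne_le hm M j u v
    _ = ∑ w, P w * ∑ j ∈ range (L + 1) with 2 * dist u v < 2 ^ j, (2 : ℝ) ^ j * R w j := by
        simp_rw [mul_sum]
        rw [sum_comm]
        exact sum_congr rfl fun w _ => sum_congr rfl fun j _ => by ring
    _ ≤ (∑ w, P w) * (27 * M * dist u v) := by
        rw [sum_mul]
        gcongr with w
        exact hring w
    _ ≤ Fintype.card (V ≃ Fin N) * (1 + Real.log (Fintype.card V)) * (27 * M * dist u v) := by
        gcongr
        exact sum_card_filter_forall_lt_le _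
    _ = 27 * (Fintype.card (V ≃ Fin N) * M) * (1 + Real.log (Fintype.card V)) * dist u v := by
        ring

theorem sum_sum_filter_clusterCenter_ne_le (hm : IsMetric dist) {d : ℕ} (hs : Spreading d dist)
    {L M : ℕ} (hM : 16 * 2 ^ L ≤ M) (u v : V) :
    ∑ ω ∈ (univ : Finset (V ≃ Fin N)) ×ˢ range M, ∑ j ∈ range (L + 1) with
        clusterCenter dist ω.1 (shiftedRadius M ω.2 j) u ≠
          clusterCenter dist ω.1 (shiftedRadius M ω.2 j) v, (2 : ℝ) ^ j
      ≤ 31 * (Fintype.card (V ≃ Fin N) * M) * (1 + Real.log (Fintype.card V)) * dist u v := by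
  rcases eq_or_ne u v with rfl | huv
  · simp [hm.1 u]
  set t := dist u v
  have ht := hs.quarter_le_dist hm huv
  have hΩ : (#((univ : Finset (V ≃ Fin N)) ×ˢ range M) : ℝ) = Fintype.card (V ≃ Fin N) * M := by
    simp
  have hlow : ∑ j ∈ range (L + 1) with ¬ 2 * t < 2 ^ j, (2 : ℝ) ^ j *
        #{ω ∈ (univ : Finset (V ≃ Fin N)) ×ˢ range M |
          clusterCenter dist ω.1 (shiftedRadius M ω.2 j) u ≠
            clusterCenter dist ω.1 (shiftedRadius M ω.2 j) v}
      ≤ 2 * (2 * t) * (Fintype.card (V ≃ Fin N) * M) := by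
    calc _ ≤ ∑ j ∈ range (L + 1) with ¬ 2 * t < 2 ^ j, (2 : ℝ) ^ j *
          (Fintype.card (V ≃ Fin N) * M) := by
          gcongr
          rw [← hΩ]
          exact_mod_cast card_filter_le _ _
      _ ≤ 2 * (2 * t) * (Fintype.card (V ≃ Fin N) * M) := by
          rw [← sum_mul]
          gcongr
          simp_rw [not_lt]
          exact sum_filter_two_pow_le (by positivity)
  have hhigh := sum_two_pow_mul_card_filter_clusterCenter_ne_le (N := N) hm hM ht
  have hlog := Real.log_natCast_nonneg (Fintype.card V)
  rw [sum_sum_filter_eq_sum_mul_card, ← sum_filter_add_sum_filter_not _ fun j => 2 * t < 2 ^ j]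
  nlinarith [mul_nonneg (mul_nonneg (Nat.cast_nonneg (Fintype.card (V ≃ Fin N)))
    (Nat.cast_nonneg M)) (mul_nonneg hlog (by positivity : (0 : ℝ) ≤ t))]

end Separation

theorem sum_abs_clusterOrder_sub_rpow_le {V : Type*} [Fintype V] [DecidableEq V] {N d : ℕ}
    {dist : V → V → ℝ} (hd : 1 ≤ d) (hm : IsMetric dist) (hs : Spreading d dist) {L M : ℕ}
    (hM : 16 * 2 ^ L ≤ M) (hL : ∀ x y, dist x y ≤ 2 ^ L / 8) (v₀ u v : V) :
    ∑ ω ∈ (univ : Finset (V ≃ Fin N)) ×ˢ range M,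
        |(clusterOrder dist ω.1 v₀ M ω.2 L u : ℝ) - clusterOrder dist ω.1 v₀ M ω.2 L v|
          ^ ((1 : ℝ) / d)
      ≤ #((univ : Finset (V ≃ Fin N)) ×ˢ range M) * (248 * (1 + Real.log (Fintype.card V)))
        * dist u v := by
  calc _ ≤ ∑ ω ∈ (univ : Finset (V ≃ Fin N)) ×ˢ range M, 8 * ∑ j ∈ range (L + 1) with
        clusterCenter dist ω.1 (shiftedRadius M ω.2 j) u ≠
          clusterCenter dist ω.1 (shiftedRadius M ω.2 j) v, (2 : ℝ) ^ j :=
        sum_le_sum fun ω hω => abs_clusterOrder_sub_rpow_le hd hm hs ω.1 v₀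
          (mem_range.mp (mem_product.mp hω).2) hL u v
    _ ≤ 8 * (31 * (Fintype.card (V ≃ Fin N) * M) * (1 + Real.log (Fintype.card V)) * dist u v) := by
        rw [← mul_sum]
        gcongr
        exact sum_sum_filter_clusterCenter_ne_le hm hs hM u v
    _ = _ := by
        simp only [card_product, card_univ, card_range, Nat.cast_mul]
        ring

theorem exists_mem_sum_sum_mul_le {ι Ω : Type*} [Fintype ι] {s : Finset Ω} (hs : s.Nonempty)
    {w D : ι → ι → ℝ} (hw : ∀ u v, 0 ≤ w u v) {X : Ω → ι → ι → ℝ} {c : ℝ}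
    (hX : ∀ u v, ∑ ω ∈ s, X ω u v ≤ #s * c * D u v) :
    ∃ ω ∈ s, ∑ u, ∑ v, w u v * X ω u v ≤ c * ∑ u, ∑ v, w u v * D u v := by
  refine exists_le_of_sum_le hs ?_
  calc ∑ ω ∈ s, ∑ u, ∑ v, w u v * X ω u v = ∑ u, ∑ v, w u v * ∑ ω ∈ s, X ω u v := by
        simp_rw [mul_sum]
        rw [sum_comm]
        exact sum_congr rfl fun u _ => sum_comm
    _ ≤ ∑ u, ∑ v, w u v * (#s * c * D u v) := by
        gcongr with u _ v _
        · exact hw u v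
        · exact hX u v
    _ = ∑ ω ∈ s, c * ∑ u, ∑ v, w u v * D u v := by
        rw [sum_const, nsmul_eq_mul, mul_sum, mul_sum]
        refine sum_congr rfl fun u _ => ?_
        rw [mul_sum, mul_sum]
        exact sum_congr rfl fun v _ => by ring

/-- The ordering lemma in general dimension `d ≥ 1`: given a metric satisfying the
`d`-dimensional spreading constraints, there is a bijection `q : V → {0, …, n-1}` with
`q v₀ = 0` whose weighted `d`-dimensional stretch `∑ w(u,v) |q(u) - q(v)|^(1/d)` is at
most `C_d log n` times the LP cost. -/
theorem ordering_lemma (d : ℕ) (hd : 1 ≤ d) :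
    ∃ C : ℝ, 0 < C ∧
    ∀ (V : Type) [Fintype V] [DecidableEq V],
    ∀ (w : V → V → ℝ) (dist : V → V → ℝ) (v₀ : V),
      2 ≤ Fintype.card V →
      (∀ u v, w u v = w v u) → (∀ u v, 0 ≤ w u v) → (∀ v, w v v = 0) →
      IsMetric dist →
      Spreading d dist →
      ∃ q : V → ℕ, Function.Injective q ∧ (∀ v, q v < Fintype.card V) ∧ q v₀ = 0 ∧
        (∑ u, ∑ v, w u v * |(q u : ℝ) - (q v : ℝ)| ^ ((1 : ℝ) / (d : ℝ))) / 2 ≤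
          C * Real.log (Fintype.card V) * ((∑ u, ∑ v, w u v * dist u v) / 2) := by
  refine ⟨1000, by norm_num, fun V _ _ w dist v₀ hn _ hw _ hm hs => ?_⟩
  obtain ⟨L, hL⟩ : ∃ L : ℕ, ∀ x y, dist x y ≤ 2 ^ L / 8 := by
    obtain ⟨D, hD⟩ := (Set.finite_range fun p : V × V => dist p.1 p.2).bddAbove
    obtain ⟨L, hL⟩ := pow_unbounded_of_one_lt (8 * D) (one_lt_two (α := ℝ))
    exact ⟨L, fun x y => by linarith [hD ⟨(x, y), rfl⟩]⟩
  set M := 16 * 2 ^ L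
  obtain ⟨⟨π, m⟩, hω, hcost⟩ := exists_mem_sum_sum_mul_le
    ⟨(Fintype.equivFin V, 0), by simp⟩ hw
    (sum_abs_clusterOrder_sub_rpow_le hd hm hs le_rfl hL v₀)
  have hm' : m < M := mem_range.mp (mem_product.mp hω).2
  refine ⟨clusterOrder dist π v₀ M m L, clusterOrder_injective hm hs π v₀ hm',
    fun v => rankBy_lt_card _ v, clusterOrder_base π v₀ M m L, ?_⟩
  have hcost0 : 0 ≤ ∑ u, ∑ v, w u v * dist u v :=
    sum_nonneg fun u _ => sum_nonneg fun v _ => mul_nonneg (hw u v) (hm.2.1 u v)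
  have hlog : Real.log 2 ≤ Real.log (Fintype.card V) :=
    Real.log_le_log two_pos (by exact_mod_cast hn)
  -- `248 * (1 + log n) ≤ 1000 * log n` because `log n ≥ log 2 > 1 / 3`
  nlinarith [Real.log_two_gt_d9]
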